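/- For any topological spaces X and Y and any ordinal α, the α-th iterated Cantor derivative of the product satisfies (X × Y)^α = ⋃_{β ⊕ γ = α} X^β × Y^γ, where ⊕ denotes the Cantor (natural/Hessenberg) sum of ordinals. -/

import Mathlib

/-!
If `x ∈ X^r \ X^(r+1)`, then `x` has an open neighbourhood `U` meeting `X^r` in a finite set
and missing `X^(r+1)`. For `(x, y)` in `X^β × Y^γ` with `x ∉ X^(β+1)` and `y ∉ Y^(γ+1)`, the
box `U × V` meets `⋃_{β' ♯ γ' = β ♯ γ} X^β' × Y^γ'` only inside the finite set
`(U ∩ X^β) × (V ∩ Y^γ)`, since `♯` is strictly monotone in each argument; so `(x, y)` is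
isolated. Conversely, a derivative of one factor times the other lies in the derivative of the
product. At limit stages one uses that every `δ ≤ β ♯ γ` splits as `β' ♯ γ'` with `β' ≤ β`,
`γ' ≤ γ`, and bounds the stages reached by `(x, y)` by the natural sum of the stages at which
its coordinates disappear.
-/

open Set

universe u

namespace Ordinal

/-- Natural (Hessenberg) addition of ordinals, as in the older Mathlib's `Ordinal.nadd`. -/
noncomputable def nadd : Ordinal.{u} → Ordinal.{u} → Ordinal.{u}
  | a, b =>
    max (blsub.{u, u} a fun a' _ => nadd a' b) (blsub.{u, u} b fun b' _ => nadd a b')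
termination_by o₁ o₂ => (o₁, o₂)

end Ordinal

namespace NaturalOps

scoped infixl:65 " ♯ " => Ordinal.nadd

end NaturalOps

/-- The Cantor derivative of a subset `A` of a space, relative to the subspace topology:
points of `A` that do not lie in a finite relatively-open subset of `A`. -/
def sderiv {X : Type*} [TopologicalSpace X] (A : Set X) : Set X :=
  {x | x ∈ A ∧ ∀ U : Set X, IsOpen U → x ∈ U → (U ∩ A).Infinite}

/-- Iterated Cantor derivative of a subset. `cbIter A α` is `A^α`. -/
noncomputable def cbIter {X : Type*} [TopologicalSpace X] (A : Set X) (o : Ordinal) : Set X :=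
  Ordinal.limitRecOn o A (fun _ ih => sderiv ih)
    (fun o _ ih => ⋂ (β : Ordinal), ⋂ (h : β < o), ih β h)

/-- `ρ` is the Cantor-Bendixson rank of `X`. -/
def IsCBRank (X : Type*) [TopologicalSpace X] (ρ : Ordinal) : Prop :=
  cbIter (Set.univ : Set X) ρ = ∅ ∧ ∀ β < ρ, cbIter (Set.univ : Set X) β ≠ ∅

namespace Ordinal

open NaturalOps

theorem lt_nadd_iff {a b c : Ordinal.{u}} :
    a < b ♯ c ↔ (∃ b' < b, a ≤ b' ♯ c) ∨ ∃ c' < c, a ≤ b ♯ c' := by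
  rw [nadd, lt_max_iff, lt_blsub_iff, lt_blsub_iff]
  simp only [exists_prop]

theorem nadd_lt_nadd_right {b b' : Ordinal.{u}} (h : b < b') (c : Ordinal.{u}) :
    b ♯ c < b' ♯ c :=
  lt_nadd_iff.2 (Or.inl ⟨b, h, le_rfl⟩)

theorem nadd_lt_nadd_left {c c' : Ordinal.{u}} (h : c < c') (b : Ordinal.{u}) :
    b ♯ c < b ♯ c' :=
  lt_nadd_iff.2 (Or.inr ⟨c, h, le_rfl⟩)

theorem strictMono_nadd_right (c : Ordinal.{u}) : StrictMono (· ♯ c) :=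
  fun _ _ h => nadd_lt_nadd_right h c

theorem strictMono_nadd_left (b : Ordinal.{u}) : StrictMono (b ♯ ·) :=
  fun _ _ h => nadd_lt_nadd_left h b

theorem nadd_le_nadd {b b' c c' : Ordinal.{u}} (hb : b ≤ b') (hc : c ≤ c') :
    b ♯ c ≤ b' ♯ c' :=
  ((strictMono_nadd_right c).monotone hb).trans ((strictMono_nadd_left b').monotone hc)

theorem le_nadd_right (a b : Ordinal.{u}) : a ≤ a ♯ b :=
  (strictMono_nadd_right b).le_apply

theorem le_nadd_left (a b : Ordinal.{u}) : b ≤ a ♯ b :=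
  (strictMono_nadd_left a).le_apply

theorem eq_and_eq_of_nadd_eq {b b' c c' : Ordinal.{u}} (hb : b' ≤ b) (hc : c' ≤ c)
    (h : b' ♯ c' = b ♯ c) : b' = b ∧ c' = c := by
  refine ⟨hb.eq_of_not_lt fun hlt => ?_, hc.eq_of_not_lt fun hlt => ?_⟩
  · exact h.not_lt ((nadd_lt_nadd_right hlt c').trans_le (nadd_le_nadd le_rfl hc))
  · exact h.not_lt ((nadd_lt_nadd_left hlt b').trans_le (nadd_le_nadd hb le_rfl))

theorem exists_nadd_eq_of_le_nadd {δ b c : Ordinal.{u}} (h : δ ≤ b ♯ c) :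
    ∃ b' ≤ b, ∃ c' ≤ c, b' ♯ c' = δ := by
  rcases h.eq_or_lt with rfl | h
  · exact ⟨b, le_rfl, c, le_rfl, rfl⟩
  rcases lt_nadd_iff.1 h with ⟨b₀, hb₀, h₀⟩ | ⟨c₀, hc₀, h₀⟩
  · obtain ⟨b', hb', c', hc', rfl⟩ := exists_nadd_eq_of_le_nadd h₀
    exact ⟨b', hb'.trans hb₀.le, c', hc', rfl⟩
  · obtain ⟨b', hb', c', hc', rfl⟩ := exists_nadd_eq_of_le_nadd h₀
    exact ⟨b', hb', c', hc'.trans hc₀.le, rfl⟩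
termination_by (b, c)

end Ordinal

section CantorDerivative

variable {X : Type*} [TopologicalSpace X]

theorem cbIter_zero (A : Set X) : cbIter A 0 = A :=
  Ordinal.limitRecOn_zero _ _ _

theorem cbIter_add_one (A : Set X) (o : Ordinal) :
    cbIter A (o + 1) = sderiv (cbIter A o) :=
  Ordinal.limitRecOn_add_one _ _ _ _

theorem cbIter_limit (A : Set X) {o : Ordinal} (h : Order.IsSuccLimit o) :
    cbIter A o = ⋂ β < o, cbIter A β :=
  Ordinal.limitRecOn_limit _ _ _ _ h

theorem mem_cbIter_univ_zero (x : X) : x ∈ cbIter univ 0 :=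
  (cbIter_zero (univ : Set X)).symm ▸ mem_univ x

theorem sderiv_subset (A : Set X) : sderiv A ⊆ A :=
  fun _ hx => hx.1

theorem cbIter_antitone (A : Set X) : Antitone (cbIter A) := by
  intro β δ hβδ
  induction δ using Ordinal.limitRecOn with
  | zero => rw [nonpos_iff_eq_zero.1 hβδ]
  | add_one d ih =>
    rcases hβδ.eq_or_lt with rfl | hlt
    · exact subset_rfl
    rw [cbIter_add_one]
    exact (sderiv_subset _).trans (ih (Order.lt_add_one_iff.1 hlt))
  | limit o ho ih =>
    rcases hβδ.eq_or_lt with rfl | hlt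
    · exact subset_rfl
    rw [cbIter_limit A ho]
    exact biInter_subset_of_mem hlt

theorem mapsTo_sderiv {Z : Type*} [TopologicalSpace Z] {f : X → Z} {A : Set X} {S : Set Z}
    (hf : Continuous f) (hinj : Function.Injective f) (h : MapsTo f A S) :
    MapsTo f (sderiv A) (sderiv S) := by
  refine fun x hx => ⟨h hx.1, fun W hW hxW => ?_⟩
  refine ((hx.2 _ (hW.preimage hf) hxW).image hinj.injOn).mono ?_
  rintro _ ⟨x', hx', rfl⟩
  exact ⟨hx'.1, h hx'.2⟩

theorem exists_isOpen_finite_of_notMem_sderiv {A : Set X} {x : X} (hx : x ∈ A)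
    (h : x ∉ sderiv A) : ∃ U, IsOpen U ∧ x ∈ U ∧ (U ∩ A).Finite := by
  by_contra! hU
  exact h ⟨hx, fun U hUo hxU => hU U hUo hxU⟩

theorem disjoint_sderiv_of_finite {A U : Set X} (hU : IsOpen U) (h : (U ∩ A).Finite) :
    Disjoint U (sderiv A) :=
  disjoint_left.2 fun _ hxU hx => hx.2 U hU hxU h

theorem exists_mem_cbIter_notMem_add_one {A : Set X} {x : X} {δ : Ordinal.{u}} (hx : x ∈ A)
    (h : x ∉ cbIter A δ) : ∃ r : Ordinal.{u}, x ∈ cbIter A r ∧ x ∉ cbIter A (r + 1) := by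
  by_contra! hsucc
  suffices ∀ δ, x ∈ cbIter A δ from h (this δ)
  intro δ
  induction δ using Ordinal.limitRecOn with
  | zero => rwa [cbIter_zero]
  | add_one d ih => exact hsucc d ih
  | limit o ho ih => exact (cbIter_limit A ho).symm ▸ mem_iInter₂.2 ih

theorem le_of_mem_cbIter_of_notMem_add_one {A : Set X} {x : X} {β r : Ordinal}
    (hr : x ∉ cbIter A (r + 1)) (hx : x ∈ cbIter A β) : β ≤ r :=
  not_lt.1 fun h => hr (cbIter_antitone A (Order.add_one_le_of_lt h) hx)

theorem exists_isOpen_finite_inter_cbIter {A : Set X} {x : X} {r : Ordinal}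
    (hx : x ∈ cbIter A r) (hr : x ∉ cbIter A (r + 1)) :
    ∃ U, IsOpen U ∧ x ∈ U ∧ (U ∩ cbIter A r).Finite ∧
      ∀ x' ∈ U, ∀ β, x' ∈ cbIter A β → β ≤ r := by
  obtain ⟨U, hUo, hxU, hfin⟩ :=
    exists_isOpen_finite_of_notMem_sderiv hx (cbIter_add_one A r ▸ hr)
  refine ⟨U, hUo, hxU, hfin, fun x' hx'U β hx' => le_of_mem_cbIter_of_notMem_add_one ?_ hx'⟩
  rw [cbIter_add_one]
  exact disjoint_left.1 (disjoint_sderiv_of_finite hUo hfin) hx'U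

end CantorDerivative

section Product

open NaturalOps

variable {X Y : Type*} [TopologicalSpace X] [TopologicalSpace Y]

variable (X Y) in
def cbProdLevel (α : Ordinal) : Set (X × Y) :=
  ⋃ (β : Ordinal), ⋃ (γ : Ordinal), ⋃ (_ : β ♯ γ = α),
    (cbIter (Set.univ : Set X) β) ×ˢ (cbIter (Set.univ : Set Y) γ)

theorem mem_cbProdLevel {α : Ordinal} {p : X × Y} :
    p ∈ cbProdLevel X Y α ↔ ∃ β γ, β ♯ γ = α ∧
      p.1 ∈ cbIter (univ : Set X) β ∧ p.2 ∈ cbIter (univ : Set Y) γ := by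
  simp only [cbProdLevel, mem_iUnion, mem_prod, exists_prop]

theorem mk_mem_cbProdLevel_of_le {α β γ : Ordinal} {x : X} {y : Y}
    (hx : x ∈ cbIter univ β) (hy : y ∈ cbIter univ γ) (h : α ≤ β ♯ γ) :
    (x, y) ∈ cbProdLevel X Y α := by
  obtain ⟨β', hβ', γ', hγ', rfl⟩ := Ordinal.exists_nadd_eq_of_le_nadd h
  exact mem_cbProdLevel.2 ⟨β', γ', rfl, cbIter_antitone _ hβ' hx, cbIter_antitone _ hγ' hy⟩

theorem cbProdLevel_antitone : Antitone (cbProdLevel X Y) := by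
  rintro α α' hα ⟨x, y⟩ hp
  obtain ⟨β, γ, rfl, hx, hy⟩ := mem_cbProdLevel.1 hp
  exact mk_mem_cbProdLevel_of_le hx hy hα

theorem cbProdLevel_zero : cbProdLevel X Y 0 = univ :=
  eq_univ_of_forall fun p =>
    mk_mem_cbProdLevel_of_le (mem_cbIter_univ_zero p.1) (mem_cbIter_univ_zero p.2) zero_le

theorem cbProdLevel_add_one_subset (α : Ordinal) :
    cbProdLevel X Y (α + 1) ⊆ sderiv (cbProdLevel X Y α) := by
  rintro ⟨x, y⟩ hp
  obtain ⟨β, γ, hsum, hx, hy⟩ := mem_cbProdLevel.1 hp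
  rcases Ordinal.lt_nadd_iff.1 (hsum ▸ lt_add_one α) with ⟨β₀, hβ₀, hle⟩ | ⟨γ₀, hγ₀, hle⟩
  · have hx₀ : x ∈ sderiv (cbIter (univ : Set X) β₀) :=
      cbIter_add_one (univ : Set X) β₀ ▸ cbIter_antitone _ (Order.add_one_le_of_lt hβ₀) hx
    exact mapsTo_sderiv (Continuous.prodMk_left y) (Prod.mk_left_injective y)
      (fun x' hx' => mk_mem_cbProdLevel_of_le hx' hy hle) hx₀
  · have hy₀ : y ∈ sderiv (cbIter (univ : Set Y) γ₀) :=
      cbIter_add_one (univ : Set Y) γ₀ ▸ cbIter_antitone _ (Order.add_one_le_of_lt hγ₀) hy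
    exact mapsTo_sderiv (Continuous.prodMk_right x) (Prod.mk_right_injective x)
      (fun y' hy' => mk_mem_cbProdLevel_of_le hx hy' hle) hy₀

theorem finite_prod_inter_cbProdLevel {U : Set X} {V : Set Y} {β γ : Ordinal}
    (hUfin : (U ∩ cbIter univ β).Finite) (hU : ∀ x ∈ U, ∀ β', x ∈ cbIter univ β' → β' ≤ β)
    (hVfin : (V ∩ cbIter univ γ).Finite) (hV : ∀ y ∈ V, ∀ γ', y ∈ cbIter univ γ' → γ' ≤ γ) :
    (U ×ˢ V ∩ cbProdLevel X Y (β ♯ γ)).Finite := by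
  refine (hUfin.prod hVfin).subset ?_
  rintro ⟨x, y⟩ ⟨⟨hxU, hyV⟩, hp⟩
  obtain ⟨β', γ', hsum, hx, hy⟩ := mem_cbProdLevel.1 hp
  obtain ⟨rfl, rfl⟩ := Ordinal.eq_and_eq_of_nadd_eq (hU x hxU β' hx) (hV y hyV γ' hy) hsum
  exact ⟨⟨hxU, hx⟩, hyV, hy⟩

theorem sderiv_cbProdLevel_subset (α : Ordinal) :
    sderiv (cbProdLevel X Y α) ⊆ cbProdLevel X Y (α + 1) := by
  rintro ⟨x, y⟩ hp
  obtain ⟨β, γ, rfl, hx, hy⟩ := mem_cbProdLevel.1 hp.1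
  by_cases hx₁ : x ∈ cbIter univ (β + 1)
  · exact mk_mem_cbProdLevel_of_le hx₁ hy
      (Order.add_one_le_of_lt (Ordinal.nadd_lt_nadd_right (lt_add_one β) γ))
  by_cases hy₁ : y ∈ cbIter univ (γ + 1)
  · exact mk_mem_cbProdLevel_of_le hx hy₁
      (Order.add_one_le_of_lt (Ordinal.nadd_lt_nadd_left (lt_add_one γ) β))
  obtain ⟨U, hUo, hxU, hUfin, hU⟩ := exists_isOpen_finite_inter_cbIter hx hx₁
  obtain ⟨V, hVo, hyV, hVfin, hV⟩ := exists_isOpen_finite_inter_cbIter hy hy₁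
  exact absurd (finite_prod_inter_cbProdLevel hUfin hU hVfin hV)
    (hp.2 _ (hUo.prod hVo) ⟨hxU, hyV⟩)

theorem iInter_cbProdLevel_of_isSuccLimit {α : Ordinal} (hα : Order.IsSuccLimit α) :
    ⋂ δ < α, cbProdLevel X Y δ = cbProdLevel X Y α := by
  refine Subset.antisymm ?_ (subset_iInter₂ fun δ hδ => cbProdLevel_antitone hδ.le)
  rintro ⟨x, y⟩ hp
  by_cases hx : x ∈ cbIter univ α
  · exact mk_mem_cbProdLevel_of_le hx (mem_cbIter_univ_zero y) (Ordinal.le_nadd_right α 0)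
  by_cases hy : y ∈ cbIter univ α
  · exact mk_mem_cbProdLevel_of_le (mem_cbIter_univ_zero x) hy (Ordinal.le_nadd_left 0 α)
  obtain ⟨r, hxr, hxr₁⟩ := exists_mem_cbIter_notMem_add_one (mem_univ x) hx
  obtain ⟨s, hys, hys₁⟩ := exists_mem_cbIter_notMem_add_one (mem_univ y) hy
  refine mk_mem_cbProdLevel_of_le hxr hys (hα.le_iff_forall_le.2 fun δ hδ => ?_)
  obtain ⟨β, γ, rfl, hxβ, hyγ⟩ := mem_cbProdLevel.1 (mem_iInter₂.1 hp δ hδ)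
  exact Ordinal.nadd_le_nadd (le_of_mem_cbIter_of_notMem_add_one hxr₁ hxβ)
    (le_of_mem_cbIter_of_notMem_add_one hys₁ hyγ)

end Product

open NaturalOps in
/-- Iterated Cantor derivatives of a product:
`(X × Y)^α = ⋃_{β ♯ γ = α} X^β × Y^γ`, where `♯` is the Hessenberg (natural) sum. -/
theorem cbIter_prod (X Y : Type*) [TopologicalSpace X] [TopologicalSpace Y] (α : Ordinal) :
    cbIter (Set.univ : Set (X × Y)) α =
      ⋃ (β : Ordinal), ⋃ (γ : Ordinal), ⋃ (_ : β ♯ γ = α),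
        (cbIter (Set.univ : Set X) β) ×ˢ (cbIter (Set.univ : Set Y) γ) := by
  change _ = cbProdLevel X Y α
  induction α using Ordinal.limitRecOn with
  | zero => rw [cbIter_zero, cbProdLevel_zero]
  | add_one α ih =>
    rw [cbIter_add_one, ih]
    exact (sderiv_cbProdLevel_subset α).antisymm (cbProdLevel_add_one_subset α)
  | limit α hα ih =>
    rw [cbIter_limit _ hα, ← iInter_cbProdLevel_of_isSuccLimit hα]
    exact iInter₂_congr ih
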